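/- If X is a topological space admitting a covering map p: X̃ → X, and U ⊆ X is an open subset that is contractible in X (i.e., the inclusion U ↪ X is null-homotopic), then p⁻¹(U) is contractible in X̃ (the inclusion p⁻¹(U) ↪ X̃ is null-homotopic), provided X̃ is path-connected and U is path-connected. -/

import Mathlib

/-- A subset `A` of a space `Y` is contractible in `Y` if the inclusion
`A ↪ Y` is homotopic to a constant map. -/
def ContractibleIn {Y : Type*} [TopologicalSpace Y] (A : Set Y) : Prop :=
  ∃ y₀ : Y, (⟨Subtype.val, continuous_subtype_val⟩ : C(A, Y)).Homotopic
    (ContinuousMap.const A y₀)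

open Set unitInterval

section HomotopyLifting

variable {E X Z : Type*} [TopologicalSpace E] [TopologicalSpace X] [TopologicalSpace Z]

/-- One strip-extension step for homotopy lifting along a covering map. -/
lemma step_lemma {p : E → X} (G : C(Z × unitInterval, X))
    {c c' : unitInterval} (hcc : c ≤ c')
    {N : Set Z} (hN : IsOpen N) {z : Z} (hzN : z ∈ N)
    (L : ↥N × unitInterval → E) (hLc : Continuous L)
    (hL : ∀ (w : ↥N) (t : unitInterval), (t : ℝ) ≤ (c : ℝ) → p (L (w, t)) = G (w.1, t))
    {F : Type*} [TopologicalSpace F] (T : Bundle.Trivialization F p)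
    {A : Set Z} (hA : IsOpen A) (hzA : z ∈ A)
    (hGA : ∀ w ∈ A, ∀ t : unitInterval, (c:ℝ) ≤ t → (t:ℝ) ≤ c' → G (w, t) ∈ T.baseSet) :
    ∃ (N' : Set Z) (_ : IsOpen N') (_ : z ∈ N') (_ : N' ⊆ N) (L' : ↥N' × unitInterval → E),
      Continuous L' ∧ (∀ (w : ↥N') (t : unitInterval), (t : ℝ) ≤ (c' : ℝ) →
        p (L' (w, t)) = G (w.1, t)) ∧
      ∀ (w : ↥N') (hw : w.1 ∈ N) (t : unitInterval), (t : ℝ) ≤ (c : ℝ) →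
        L' (w, t) = L (⟨w.1, hw⟩, t) := by
  classical
  refine ⟨N ∩ A, hN.inter hA, ⟨hzN, hzA⟩, inter_subset_left, ?_⟩
  have hι : Continuous (Set.inclusion (inter_subset_left : N ∩ A ⊆ N)) :=
    continuous_inclusion _
  set ι : ↥(N ∩ A) → ↥N := Set.inclusion inter_subset_left with hιdef
  -- clamp to [c, c']
  have hmem01 : ∀ t : unitInterval, min (max (t:ℝ) c) c' ∈ Set.Icc (0:ℝ) 1 := fun t =>
    ⟨le_min (le_max_of_le_right c.2.1) c'.2.1, min_le_of_right_le c'.2.2⟩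
  set sig : unitInterval → unitInterval :=
    fun t => ⟨min (max (t:ℝ) c) c', hmem01 t⟩ with hsig
  have hsig_mem : ∀ t, (sig t : ℝ) = min (max (t:ℝ) c) c' := fun t => rfl
  have hsig_lb : ∀ t, (c:ℝ) ≤ (sig t : ℝ) := fun t =>
    le_min (le_max_right _ _) hcc
  have hsig_ub : ∀ t, (sig t : ℝ) ≤ (c':ℝ) := fun t => min_le_right _ _
  have hsigc : ∀ t : unitInterval, (c:ℝ) ≤ (t:ℝ) → (t:ℝ) ≤ c' → sig t = t := by
    intro t h1 h2
    apply Subtype.ext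
    show min (max (t:ℝ) c) c' = (t:ℝ)
    rw [max_eq_left h1, min_eq_left h2]
  have hsig_cont : Continuous sig := by
    apply Continuous.subtype_mk
    exact (continuous_subtype_val.max continuous_const).min continuous_const
  -- the map at time c lands in T.source
  have hmemsrc : ∀ w : ↥(N ∩ A), L (ι w, c) ∈ T.source := by
    intro w
    rw [T.mem_source, hL _ c le_rfl]
    exact hGA _ w.2.2 c le_rfl hcc
  set f₂ : ↥(N ∩ A) × unitInterval → E := fun q =>
    T.toOpenPartialHomeomorph.symm (G (q.1.1, sig q.2), (T (L (ι q.1, c))).2) with hf₂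
  have htarget : ∀ q : ↥(N ∩ A) × unitInterval,
      ((G (q.1.1, sig q.2), (T (L (ι q.1, c))).2) : X × F) ∈ T.target := by
    intro q
    rw [T.mem_target]
    exact hGA _ q.1.2.2 _ (hsig_lb q.2) (hsig_ub q.2)
  have hf₂c : Continuous f₂ := by
    apply T.toOpenPartialHomeomorph.continuousOn_symm.comp_continuous _ htarget
    apply Continuous.prodMk
    · exact G.continuous.comp ((continuous_subtype_val.comp continuous_fst).prodMk
        (hsig_cont.comp continuous_snd))
    · refine continuous_snd.comp (T.toOpenPartialHomeomorph.continuousOn.comp_continuous ?_ ?_)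
      · exact hLc.comp ((hι.comp continuous_fst).prodMk continuous_const)
      · exact fun q => hmemsrc q.1
  refine ⟨fun q => if (q.2 : ℝ) ≤ (c : ℝ) then L (ι q.1, q.2) else f₂ q, ?_, ?_, ?_⟩
  · apply Continuous.if_le
    · exact hLc.comp ((hι.comp continuous_fst).prodMk continuous_snd)
    · exact hf₂c
    · exact continuous_subtype_val.comp continuous_snd
    · exact continuous_const
    · -- boundary agreement
      rintro ⟨w, t⟩ hq
      have htc : t = c := Subtype.ext hq
      show L (ι w, t) = f₂ (w, t)
      rw [htc, hf₂]
      have hsigcc : sig c = c := hsigc _ le_rfl hcc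
      show L (ι w, c) =
        T.toOpenPartialHomeomorph.symm (G ((w:Z), sig c), (T (L (ι w, c))).2)
      have hpe : G ((w:Z), sig c) = p (L (ι w, c)) := by
        rw [hsigcc, hL _ _ le_rfl]
      rw [hpe]
      have hTe : ((p (L (ι w, c)), (T (L (ι w, c))).2) : X × F) = T (L (ι w, c)) :=
        Prod.ext (T.coe_fst (hmemsrc w)).symm rfl
      rw [hTe]
      exact (T.toOpenPartialHomeomorph.left_inv (hmemsrc w)).symm
  · intro w t htc'
    by_cases h : (t : ℝ) ≤ (c : ℝ)
    · simp only [if_pos h]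
      exact hL _ _ h
    · simp only [if_neg h]
      show p (f₂ (w, t)) = _
      rw [hf₂]
      have := T.proj_symm_apply (htarget (w, t))
      show p (T.toOpenPartialHomeomorph.symm _) = _
      rw [this]
      rw [hsigc t (le_of_not_ge h) htc']
  · intro w hw t ht
    simp only [if_pos ht]
    rfl

lemma fiber_nonempty_locally {p : E → X} (hp : IsCoveringMap p) (x : X) :
    ∃ U : Set X, IsOpen U ∧ x ∈ U ∧
      ∀ y ∈ U, (Nonempty (p ⁻¹' {y}) ↔ Nonempty (p ⁻¹' {x})) := by
  obtain ⟨_, U, hxU, hU, _, H, hH⟩ := hp x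
  refine ⟨U, hU, hxU, fun y hy => ⟨fun ⟨e⟩ => ⟨(H ⟨e.1, ?_⟩).2⟩,
    fun ⟨i⟩ => ⟨⟨(H.symm (⟨y, hy⟩, i)).1, ?_⟩⟩⟩⟩
  · have he : p e.1 = y := e.2
    show p e.1 ∈ U
    rw [he]; exact hy
  · show p _ = y
    have := hH (H.symm (⟨y, hy⟩, i))
    rw [H.apply_symm_apply] at this
    exact this.symm

lemma fiber_nonempty_path {p : E → X} (hp : IsCoveringMap p) (γ : unitInterval → X)
    (hγ : Continuous γ) (h0 : Nonempty (p ⁻¹' {γ 0})) (t : unitInterval) :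
    Nonempty (p ⁻¹' {γ t}) := by
  have hS : IsClopen {t : unitInterval | Nonempty (p ⁻¹' {γ t})} := by
    constructor
    · rw [← isOpen_compl_iff, isOpen_iff_mem_nhds]
      intro s hs
      obtain ⟨U, hU, hsU, hiff⟩ := fiber_nonempty_locally hp (γ s)
      filter_upwards [hγ.continuousAt.preimage_mem_nhds (hU.mem_nhds hsU)] with r hr
      exact fun h => hs ((hiff _ hr).mp h)
    · rw [isOpen_iff_mem_nhds]
      intro s hs
      obtain ⟨U, hU, hsU, hiff⟩ := fiber_nonempty_locally hp (γ s)
      filter_upwards [hγ.continuousAt.preimage_mem_nhds (hU.mem_nhds hsU)] with r hr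
      exact (hiff _ hr).mpr hs
  have := hS.eq_univ ⟨0, h0⟩
  have ht : t ∈ {t : unitInterval | Nonempty (p ⁻¹' {γ t})} := this ▸ Set.mem_univ t
  exact ht

/-- Local homotopy lifting: the lift exists on a neighborhood of each point. -/
lemma exists_local_lift {p : E → X} (hp : IsCoveringMap p) (G : C(Z × unitInterval, X))
    (g₀ : C(Z, E)) (hg₀ : ∀ z, p (g₀ z) = G (z, 0)) (z : Z) :
    ∃ (N : Set Z) (_ : IsOpen N) (_ : z ∈ N) (L : ↥N × unitInterval → E),
      Continuous L ∧ (∀ (w : ↥N) (t : unitInterval), p (L (w, t)) = G (w.1, t)) ∧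
      ∀ w : ↥N, L (w, 0) = g₀ w.1 := by
  classical
  haveI hne : ∀ t : unitInterval, Nonempty ↑(p ⁻¹' {G (z, t)}) := fun t =>
    fiber_nonempty_path hp (fun s => G (z, s))
      (G.continuous.comp (Continuous.prodMk continuous_const continuous_id)) ⟨⟨g₀ z, hg₀ z⟩⟩ t
  -- trivializations around each point of the track of z
  have hTmem : ∀ t : unitInterval, G (z, t) ∈ (hp (G (z, t))).toTrivialization.baseSet :=
    fun t => (hp (G (z, t))).mem_toTrivialization_baseSet
  have hopen : ∀ t : unitInterval,
      IsOpen (G ⁻¹' (hp (G (z, t))).toTrivialization.baseSet) :=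
    fun t => (hp (G (z, t))).toTrivialization.open_baseSet.preimage G.continuous
  have hmem : ∀ t : unitInterval,
      (z, t) ∈ G ⁻¹' (hp (G (z, t))).toTrivialization.baseSet := fun t => hTmem t
  choose A B hAopen hBopen hzA htB hsub using
    fun t => isOpen_prod_iff.mp (hopen t) z t (hmem t)
  -- Lebesgue number for the cover `B` of `I`
  obtain ⟨δ, hδpos, hball⟩ := lebesgue_number_lemma_of_metric (isCompact_univ (X := unitInterval))
    hBopen (fun t _ => Set.mem_iUnion.mpr ⟨t, htB t⟩)
  choose pt hpt using fun t : unitInterval => hball t (Set.mem_univ t)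
  obtain ⟨n, hn⟩ := exists_nat_one_div_lt hδpos
  set m : ℕ := n + 1 with hm
  have hmpos : (0:ℝ) < m := by positivity
  set c : ℕ → unitInterval := fun i => Set.projIcc (0:ℝ) 1 zero_le_one (i / m) with hc
  have hc0 : c 0 = 0 := by
    apply Subtype.ext
    simp [hc, Set.projIcc_of_mem, Set.left_mem_Icc.mpr zero_le_one]
  have hcm : c m = 1 := by
    apply Subtype.ext
    have : ((m:ℝ) / m) = 1 := div_self (ne_of_gt hmpos)
    simp [hc, this, Set.projIcc_of_mem, Set.right_mem_Icc.mpr zero_le_one]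
  have hcmono : ∀ i : ℕ, c i ≤ c (i + 1) := by
    intro i
    apply Set.monotone_projIcc
    exact (div_le_div_iff_of_pos_right hmpos).mpr (by push_cast; linarith)
  have hgap : ∀ i : ℕ, (c (i + 1) : ℝ) - (c i : ℝ) ≤ 1 / m := by
    intro i
    have h1 : dist (c (i + 1)) (c i) ≤ 1 * dist (((i:ℝ) + 1) / m) ((i:ℝ) / m) := by
      have := (LipschitzWith.projIcc (zero_le_one (α := ℝ))).dist_le_mul
        (((i:ℝ) + 1) / m) ((i:ℝ) / m)
      simpa [hc, Nat.cast_succ] using this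
    have h2 : dist (((i:ℝ) + 1) / m) ((i:ℝ) / m) = 1 / m := by
      rw [Real.dist_eq, abs_of_nonneg] <;> [skip; skip] <;>
        · rw [div_sub_div_same]
          ring_nf
          try positivity
    have h3 : dist (c (i + 1)) (c i) = |(c (i + 1) : ℝ) - (c i : ℝ)| := by
      rw [Subtype.dist_eq, Real.dist_eq]
    calc (c (i + 1) : ℝ) - (c i : ℝ) ≤ |(c (i + 1) : ℝ) - (c i : ℝ)| := le_abs_self _
      _ = dist (c (i + 1)) (c i) := h3.symm
      _ ≤ 1 * dist (((i:ℝ) + 1) / m) ((i:ℝ) / m) := h1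
      _ = 1 / m := by rw [h2, one_mul]
  -- main induction up the partition
  have key : ∀ i : ℕ, i ≤ m → ∃ (N : Set Z) (_ : IsOpen N) (_ : z ∈ N)
      (L : ↥N × unitInterval → E), Continuous L ∧
      (∀ (w : ↥N) (t : unitInterval), (t : ℝ) ≤ (c i : ℝ) → p (L (w, t)) = G (w.1, t)) ∧
      ∀ w : ↥N, L (w, 0) = g₀ w.1 := by
    intro i
    induction i with
    | zero =>
      intro _
      refine ⟨Set.univ, isOpen_univ, trivial, fun q => g₀ q.1.1,
        g₀.continuous.comp (continuous_subtype_val.comp continuous_fst), ?_, fun w => rfl⟩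
      intro w t ht
      rw [hc0] at ht
      have ht0 : t = 0 := Subtype.ext (le_antisymm (by exact_mod_cast ht) t.2.1)
      rw [ht0]
      exact hg₀ w.1
    | succ i ih =>
      intro hi
      obtain ⟨N, hN, hzN, L, hLc, hL, hL0⟩ := ih (Nat.le_of_succ_le hi)
      have hGA : ∀ w ∈ A (pt (c i)), ∀ t : unitInterval, ((c i : unitInterval):ℝ) ≤ t →
          (t:ℝ) ≤ (c (i+1) : unitInterval) →
          G (w, t) ∈ (hp (G (z, pt (c i)))).toTrivialization.baseSet := by
        intro w hw t h1 h2
        have htB' : t ∈ B (pt (c i)) := by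
          apply hpt (c i)
          rw [Metric.mem_ball, Subtype.dist_eq, Real.dist_eq, abs_of_nonneg (by linarith)]
          have := hgap i
          have hlt : (1:ℝ) / m < δ := by rw [hm]; exact_mod_cast hn
          linarith
        exact hsub (pt (c i)) ⟨hw, htB'⟩
      obtain ⟨N', hN', hzN', hsubN, L', hL'c, hL', hagree⟩ :=
        step_lemma G (hcmono i) hN hzN L hLc hL
          ((hp (G (z, pt (c i)))).toTrivialization) (hAopen (pt (c i))) (hzA (pt (c i))) hGA
      refine ⟨N', hN', hzN', L', hL'c, hL', fun w => ?_⟩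
      have h0le : ((0 : unitInterval) : ℝ) ≤ (c i : ℝ) := by
        simpa using (c i).2.1
      rw [hagree w (hsubN w.2) 0 h0le]
      exact hL0 _
  obtain ⟨N, hN, hzN, L, hLc, hL, hL0⟩ := key m le_rfl
  refine ⟨N, hN, hzN, L, hLc, fun w t => ?_, hL0⟩
  apply hL
  rw [hcm]
  simpa using t.2.2

/-- Homotopy lifting property for covering maps. -/
lemma IsCoveringMap.exists_homotopy_lift {p : E → X} (hp : IsCoveringMap p)
    (G : C(Z × unitInterval, X)) (g₀ : C(Z, E)) (hg₀ : ∀ z, p (g₀ z) = G (z, 0)) :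
    ∃ Λ : C(Z × unitInterval, E), (∀ q, p (Λ q) = G q) ∧ ∀ z, Λ (z, 0) = g₀ z := by
  classical
  choose N hNopen hzN L hLc hL hL0 using fun z : Z => exists_local_lift hp G g₀ hg₀ z
  set Λraw : Z × unitInterval → E := fun q => L q.1 (⟨q.1, hzN q.1⟩, q.2) with hΛraw
  -- uniqueness of lifts along each track
  have huniq : ∀ (z₀ : Z) (q : Z × unitInterval) (h : q.1 ∈ N z₀),
      Λraw q = L z₀ (⟨q.1, h⟩, q.2) := by
    rintro z₀ ⟨w, t⟩ h
    have hfun : (fun s : unitInterval => L w (⟨w, hzN w⟩, s)) =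
        fun s : unitInterval => L z₀ (⟨w, h⟩, s) := by
      refine hp.eq_of_comp_eq ?_ ?_ ?_ 0 ?_
      · exact (hLc w).comp (Continuous.prodMk continuous_const continuous_id)
      · exact (hLc z₀).comp (Continuous.prodMk continuous_const continuous_id)
      · funext s
        show p (L w _) = p (L z₀ _)
        rw [hL w _ s, hL z₀ _ s]
      · show L w (⟨w, hzN w⟩, 0) = L z₀ (⟨w, h⟩, 0)
        rw [hL0 w ⟨w, hzN w⟩, hL0 z₀ ⟨w, h⟩]
    exact congrFun hfun t
  have hΛc : Continuous Λraw := by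
    rw [continuous_iff_continuousAt]
    rintro ⟨z₀, t₀⟩
    set M : Z × unitInterval → E := fun q =>
      if h : q.1 ∈ N z₀ then L z₀ (⟨q.1, h⟩, q.2) else g₀ q.1 with hM
    have hMcont : ContinuousOn M ((N z₀) ×ˢ (Set.univ : Set unitInterval)) := by
      rw [continuousOn_iff_continuous_restrict]
      have hres : ((N z₀) ×ˢ (Set.univ : Set unitInterval)).domRestrict M =
          fun q : ↥((N z₀) ×ˢ (Set.univ : Set unitInterval)) =>
            L z₀ (⟨q.1.1, q.2.1⟩, q.1.2) := funext fun q => dif_pos q.2.1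
      rw [hres]
      apply (hLc z₀).comp
      apply Continuous.prodMk
      · exact Continuous.subtype_mk (continuous_fst.comp continuous_subtype_val) _
      · exact continuous_snd.comp continuous_subtype_val
    have hnhds : (N z₀) ×ˢ (Set.univ : Set unitInterval) ∈ nhds (z₀, t₀) :=
      ((hNopen z₀).prod isOpen_univ).mem_nhds ⟨hzN z₀, Set.mem_univ _⟩
    have hMA : ContinuousAt M (z₀, t₀) := hMcont.continuousAt hnhds
    apply hMA.congr
    apply Filter.eventuallyEq_of_mem hnhds
    intro q hq
    rw [huniq z₀ q hq.1, hM]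
    simp only [dif_pos hq.1]
  refine ⟨⟨Λraw, hΛc⟩, fun q => ?_, fun w => ?_⟩
  · exact hL q.1 _ q.2
  · exact hL0 w _

end HomotopyLifting

/-- If `p : X̃ → X` is a covering map, `U ⊆ X` is open and contractible in `X`,
`X̃` is path-connected and `U` is path-connected, then `p ⁻¹' U` is
contractible in `X̃`. -/
theorem preimage_contractibleIn_of_coveringMap
    {E X : Type*} [TopologicalSpace E] [TopologicalSpace X]
    (p : E → X) (hp : IsCoveringMap p)
    (U : Set X) (hUopen : IsOpen U)
    (hE : PathConnectedSpace E) (hU : IsPathConnected U)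
    (hcontr : ContractibleIn U) :
    ContractibleIn (p ⁻¹' U) := by
  classical
  haveI := hE
  obtain ⟨x₀, hhom⟩ := hcontr
  obtain H := hhom.some
  set Z := ↥(p ⁻¹' U) with hZ
  -- the homotopy to lift
  have hGc : Continuous fun q : Z × unitInterval => H (q.2, (⟨p q.1.1, q.1.2⟩ : ↥U)) := by
    apply H.continuous.comp
    apply Continuous.prodMk
    · exact continuous_snd
    · exact Continuous.subtype_mk ((hp.continuous).comp
        (continuous_subtype_val.comp continuous_fst)) _
  set G : C(Z × unitInterval, X) :=
    ⟨fun q => H (q.2, (⟨p q.1.1, q.1.2⟩ : ↥U)), hGc⟩ with hG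
  set g₀ : C(Z, E) := ⟨Subtype.val, continuous_subtype_val⟩ with hg₀def
  have hg₀ : ∀ z : Z, p (g₀ z) = G (z, 0) := by
    intro z
    show p z.1 = H (0, (⟨p z.1, z.2⟩ : ↥U))
    rw [H.apply_zero]
    rfl
  obtain ⟨Λ, hΛp, hΛ0⟩ := hp.exists_homotopy_lift G g₀ hg₀
  -- the endpoint lands in the fiber over x₀
  haveI hdisc : DiscreteTopology ↥(p ⁻¹' {x₀}) := (hp x₀).1
  have hfib : ∀ z : Z, Λ (z, 1) ∈ p ⁻¹' {x₀} := by
    intro z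
    apply Set.mem_preimage.mpr
    have h1 : p (Λ (z, 1)) = x₀ := by
      rw [hΛp (z, 1)]
      show H (1, (⟨p z.1, z.2⟩ : ↥U)) = x₀
      rw [H.apply_one]
      rfl
    rw [h1]
    rfl
  set Λ₁ : Z → ↥(p ⁻¹' {x₀}) := fun z => ⟨Λ (z, 1), hfib z⟩ with hΛ₁
  have hΛ₁c : Continuous Λ₁ :=
    Continuous.subtype_mk (Λ.continuous.comp (Continuous.prodMk continuous_id
      continuous_const)) _
  -- a base point and paths from the fiber to it
  obtain e₀ : E := Classical.arbitrary E
  set Ψ : ↥(p ⁻¹' {x₀}) → C(unitInterval, E) :=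
    fun f => (PathConnectedSpace.somePath (f : E) e₀).toContinuousMap with hΨ
  have hΨc : Continuous Ψ := continuous_of_discreteTopology
  have hKc' : Continuous fun q : unitInterval × Z => Ψ (Λ₁ q.2) q.1 := by
    have h1 : Continuous fun q : unitInterval × Z => ((Ψ (Λ₁ q.2), q.1) :
        C(unitInterval, E) × unitInterval) :=
      Continuous.prodMk (hΨc.comp (hΛ₁c.comp continuous_snd)) continuous_fst
    exact ContinuousEval.continuous_eval.comp h1
  -- midpoint map
  set mid : C(Z, E) := ⟨fun z => Λ (z, 1), Λ.continuous.comp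
    (Continuous.prodMk continuous_id continuous_const)⟩ with hmid
  refine ⟨e₀, ?_⟩
  have H1 : (⟨Subtype.val, continuous_subtype_val⟩ : C(Z, E)).Homotopic mid := by
    refine ⟨⟨⟨fun q => Λ (q.2, q.1), Λ.continuous.comp
      (Continuous.prodMk continuous_snd continuous_fst)⟩, ?_, ?_⟩⟩
    · intro z; exact hΛ0 z
    · intro z; rfl
  have H2 : mid.Homotopic (ContinuousMap.const Z e₀) := by
    refine ⟨⟨⟨fun q => Ψ (Λ₁ q.2) q.1, hKc'⟩, ?_, ?_⟩⟩
    · intro z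
      show (PathConnectedSpace.somePath ((Λ₁ z : E)) e₀) 0 = Λ (z, 1)
      rw [Path.source]
    · intro z
      show (PathConnectedSpace.somePath ((Λ₁ z : E)) e₀) 1 = e₀
      rw [Path.target]
  exact H1.trans H2
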